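/- Let f : Fin n → ℝ≥0 and g : Fin n → ℝ≥0 be such that g is obtained from f by changing exactly two values: g(x) = x', g(y) = y' with f(x) + f(y) ≤ x' + y' and max(f(x), f(y)) ≤ max(x', y'), and g agrees with f elsewhere. Then for all k ∈ {1,...,n}, the sum of the k largest values of f is at most the sum of the k largest values of g. -/

import Mathlib

/-- The `k`-centrum value of `f`: the largest possible sum of `f` over a subset of size `k`
(i.e. the sum of the `k` largest values of `f`). -/
noncomputable def kSum (n k : ℕ) (f : Fin n → ℝ) : ℝ :=
  sSup {x : ℝ | ∃ S : Finset (Fin n), S.card = k ∧ x = ∑ i ∈ S, f i}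

/-!
Every `k`-subset `S` is matched by a `k`-subset `T` with `∑_S f ≤ ∑_T g`. If `S` contains both
changed points, take `T = S` and use the sum condition; if it contains neither, `T = S`; if it
contains only one of them, swap it for whichever changed point carries the larger new value,
which by the max condition dominates its old value.
-/

open Finset

theorem kSum_le_kSum_of_forall_exists {n : ℕ} {f g : Fin n → ℝ}
    (h : ∀ S : Finset (Fin n), ∃ T : Finset (Fin n), T.card = S.card ∧
      ∑ i ∈ S, f i ≤ ∑ i ∈ T, g i) (k : ℕ) :
    kSum n k f ≤ kSum n k g := by
  by_cases hk : ∃ S : Finset (Fin n), S.card = k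
  · obtain ⟨S₀, hS₀⟩ := hk
    have hbdd : BddAbove {x : ℝ | ∃ S : Finset (Fin n), S.card = k ∧ x = ∑ i ∈ S, g i} :=
      ((Set.finite_range fun S : Finset (Fin n) => ∑ i ∈ S, g i).subset
        (by rintro _ ⟨S, -, rfl⟩; exact ⟨S, rfl⟩)).bddAbove
    refine csSup_le ⟨_, S₀, hS₀, rfl⟩ ?_
    rintro _ ⟨S, hS, rfl⟩
    obtain ⟨T, hT, hle⟩ := h S
    exact hle.trans (le_csSup hbdd ⟨T, hT.trans hS, rfl⟩)
  · -- no `k`-subsets at all (`n < k`): both sides are the junk value `sSup ∅ = 0`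
    simp only [not_exists] at hk
    simp [kSum, hk]

section Replacement

variable {ι : Type*} {f g : ι → ℝ} {x y : ι}

theorem sum_eq_of_eq_off_pair (hrest : ∀ i, i ≠ x → i ≠ y → g i = f i) {R : Finset ι}
    (hx : x ∉ R) (hy : y ∉ R) : ∑ i ∈ R, g i = ∑ i ∈ R, f i :=
  sum_congr rfl fun i hi => hrest i (ne_of_mem_of_not_mem hi hx) (ne_of_mem_of_not_mem hi hy)

theorem exists_card_eq_sum_le_of_mem_of_notMem [DecidableEq ι] (hrest : ∀ i, i ≠ x → i ≠ y → g i = f i)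
    (hfx : f x ≤ max (g x) (g y)) {S : Finset ι} (hx : x ∈ S) (hy : y ∉ S) :
    ∃ T : Finset ι, T.card = S.card ∧ ∑ i ∈ S, f i ≤ ∑ i ∈ T, g i := by
  obtain ⟨z, hz, hgz⟩ : ∃ z, (z = x ∨ z = y) ∧ g z = max (g x) (g y) := by
    rcases max_choice (g x) (g y) with h | h
    exacts [⟨x, .inl rfl, h.symm⟩, ⟨y, .inr rfl, h.symm⟩]
  have hzS : z ∉ S.erase x := by
    rcases hz with rfl | rfl
    exacts [notMem_erase z S, fun h => hy (mem_of_mem_erase h)]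
  refine ⟨insert z (S.erase x), by rw [card_insert_of_notMem hzS, card_erase_add_one hx], ?_⟩
  rw [sum_insert hzS, ← add_sum_erase S f hx,
    sum_eq_of_eq_off_pair hrest (notMem_erase x S) fun h => hy (mem_of_mem_erase h)]
  linarith

theorem exists_card_eq_sum_le_of_replace_pair [DecidableEq ι] (hrest : ∀ i, i ≠ x → i ≠ y → g i = f i)
    (hxy : x ≠ y) (hsum : f x + f y ≤ g x + g y)
    (hmax : max (f x) (f y) ≤ max (g x) (g y)) (S : Finset ι) :
    ∃ T : Finset ι, T.card = S.card ∧ ∑ i ∈ S, f i ≤ ∑ i ∈ T, g i := by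
  by_cases hx : x ∈ S <;> by_cases hy : y ∈ S
  · refine ⟨S, rfl, ?_⟩
    have hpair : {x, y} ⊆ S := insert_subset hx (singleton_subset_iff.2 hy)
    rw [← sum_sdiff hpair, ← sum_sdiff hpair (f := g), sum_pair hxy, sum_pair hxy,
      sum_eq_of_eq_off_pair hrest (by simp) (by simp)]
    linarith
  · exact exists_card_eq_sum_le_of_mem_of_notMem hrest ((le_max_left _ _).trans hmax) hx hy
  · refine exists_card_eq_sum_le_of_mem_of_notMem (fun i hiy hix => hrest i hix hiy) ?_ hy hx
    rw [max_comm]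
    exact (le_max_right _ _).trans hmax
  · exact ⟨S, rfl, (sum_eq_of_eq_off_pair hrest hx hy).ge⟩

end Replacement

theorem stmt_19_general (n : ℕ) (f g : Fin n → ℝ) (x y : Fin n) (hxy : x ≠ y) (x' y' : ℝ)
    (hgx : g x = x') (hgy : g y = y')
    (hrest : ∀ i, i ≠ x → i ≠ y → g i = f i)
    (hsum : f x + f y ≤ x' + y') (hmax : max (f x) (f y) ≤ max x' y')
    (k : ℕ) :
    kSum n k f ≤ kSum n k g := by
  subst hgx hgy
  exact kSum_le_kSum_of_forall_exists
    (exists_card_eq_sum_le_of_replace_pair hrest hxy hsum hmax) k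

/-- A two-element replacement that weakly increases both the sum and the max of the two
replaced values weakly increases the sum of the `k` largest values, for every `k`. -/
theorem stmt_19 (n : ℕ) (f g : Fin n → ℝ) (x y : Fin n) (hxy : x ≠ y) (x' y' : ℝ)
    (hf : ∀ i, 0 ≤ f i) (hg : ∀ i, 0 ≤ g i)
    (hgx : g x = x') (hgy : g y = y')
    (hrest : ∀ i, i ≠ x → i ≠ y → g i = f i)
    (hsum : f x + f y ≤ x' + y') (hmax : max (f x) (f y) ≤ max x' y')
    (k : ℕ) (hk1 : 1 ≤ k) (hkn : k ≤ n) :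
    kSum n k f ≤ kSum n k g :=
  stmt_19_general n f g x y hxy x' y' hgx hgy hrest hsum hmax k
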